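/- arXiv:1506.02740 — 3 statements merged into one kernel-verified Lean document; each statement's English description precedes it below -/
import Mathlib

section
/- Any sequence of permutations in S_n obtained from an even permutation by repeatedly applying push-to-the-top operations t_i with odd indices i consists entirely of even permutations, and hence any cyclic Gray code using only odd-index push-to-the-top operations is a snake-in-the-box code under Kendall's τ-metric (all pairwise Kendall distances are at least 2). -/
def adjTranspositions (n : ℕ) : Set (Equiv.Perm (Fin n)) :=
  {s | ∃ i j : Fin n, (j : ℕ) = (i : ℕ) + 1 ∧ s = Equiv.swap i j}

/-- Kendall's τ-distance on `S_n`. -/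
noncomputable def kendall {n : ℕ} (σ π : Equiv.Perm (Fin n)) : ℕ :=
  sInf {k | ∃ l : List (Equiv.Perm (Fin n)), l.length = k ∧
    (∀ s ∈ l, s ∈ adjTranspositions n) ∧ σ * l.prod = π}

/-- Push-to-the-top operation `t_{i+1}` (1-indexed): move the entry at 0-indexed
position `i` to the front. -/
def pushToTop {n : ℕ} (i : Fin n) (π : Equiv.Perm (Fin n)) : Equiv.Perm (Fin n) :=
  π * (Fin.cycleRange i)⁻¹

/-!
The operation `t_i` composes with an `i`-cycle, of sign `(-1)^(i-1)`, so for odd `i` it preserves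
the sign and the whole code lies in the alternating group. Two distinct permutations of equal sign
are related by a product of adjacent transpositions whose length is even and nonzero, hence at
least `2`.
-/

open Equiv Equiv.Perm

theorem sign_pushToTop_of_even {n : ℕ} {i : Fin n} (hi : Even (i : ℕ)) (π : Perm (Fin n)) :
    sign (pushToTop i π) = sign π := by
  rw [pushToTop, map_mul, map_inv, Fin.sign_cycleRange, hi.neg_one_pow, inv_one, mul_one]

theorem sign_eq_of_pushToTop_even {n : ℕ} {c : ℕ → Perm (Fin n)} {idx : ℕ → Fin n}
    (hstep : ∀ k, c (k + 1) = pushToTop (idx k) (c k)) (heven : ∀ k, Even (idx k : ℕ)) (k : ℕ) :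
    sign (c k) = sign (c 0) := by
  induction k with
  | zero => rfl
  | succ k ih => rw [hstep, sign_pushToTop_of_even (heven k), ih]

theorem sign_of_mem_adjTranspositions {n : ℕ} {s : Perm (Fin n)} (hs : s ∈ adjTranspositions n) :
    sign s = -1 := by
  obtain ⟨i, j, hij, rfl⟩ := hs
  exact sign_swap (Fin.ne_of_val_ne (by omega))

theorem sign_prod_of_forall_mem_adjTranspositions {n : ℕ} {l : List (Perm (Fin n))}
    (hl : ∀ s ∈ l, s ∈ adjTranspositions n) : sign l.prod = (-1) ^ l.length := by
  rw [← MonoidHom.coe_coe, map_list_prod, List.prod_eq_pow_card _ (-1), List.length_map]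
  simpa using fun s hs ↦ sign_of_mem_adjTranspositions (hl s hs)

theorem exists_list_adjTranspositions_prod_eq {n : ℕ} (σ : Perm (Fin n)) :
    ∃ l : List (Perm (Fin n)), (∀ s ∈ l, s ∈ adjTranspositions n) ∧ l.prod = σ := by
  cases n with
  | zero => exact ⟨[], by simp, Subsingleton.elim _ _⟩
  | succ m =>
    have hσ : σ ∈ Submonoid.closure (Set.range fun i : Fin m ↦ swap i.castSucc i.succ) := by
      rw [mclosure_swap_castSucc_succ]; trivial
    obtain ⟨l, hl, hprod⟩ := Submonoid.exists_list_of_mem_closure hσ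
    refine ⟨l, fun s hs ↦ ?_, hprod⟩
    obtain ⟨i, rfl⟩ := hl s hs
    exact ⟨i.castSucc, i.succ, by simp, rfl⟩

theorem two_le_kendall_of_sign_eq {n : ℕ} {σ π : Perm (Fin n)} (hne : σ ≠ π)
    (hsign : sign σ = sign π) : 2 ≤ kendall σ π := by
  obtain ⟨l, hl, hprod⟩ := exists_list_adjTranspositions_prod_eq (σ⁻¹ * π)
  refine le_csInf ⟨l.length, l, rfl, hl, by rw [hprod, mul_inv_cancel_left]⟩ ?_
  rintro _ ⟨l, rfl, hl, rfl⟩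
  have hlen : l.length ≠ 0 := fun h ↦ hne (by simp [List.length_eq_zero_iff.mp h])
  have heven : Even l.length := by
    rw [map_mul, sign_prod_of_forall_mem_adjTranspositions hl, left_eq_mul] at hsign
    exact (neg_one_pow_eq_one_iff_even (by decide)).mp hsign
  obtain ⟨r, hr⟩ := heven
  omega

/-- A sequence obtained from an even permutation using only push-to-the-top operations on
odd (1-indexed) indices consists of even permutations, and any two distinct permutations
in it are at Kendall's τ-distance at least 2. -/
theorem stmt_3 {n : ℕ} (c : ℕ → Equiv.Perm (Fin n)) (idx : ℕ → Fin n)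
    (h0 : Equiv.Perm.sign (c 0) = 1)
    (hstep : ∀ k, c (k + 1) = pushToTop (idx k) (c k))
    (hodd : ∀ k, Odd ((idx k : ℕ) + 1)) :
    (∀ k, Equiv.Perm.sign (c k) = 1) ∧
    (∀ k l, c k ≠ c l → 2 ≤ kendall (c k) (c l)) := by
  have heven (k : ℕ) : Even (idx k : ℕ) := by simpa [Nat.odd_add_one] using hodd k
  have hsign (k : ℕ) : sign (c k) = 1 := by rw [sign_eq_of_pushToTop_even hstep heven, h0]
  exact ⟨hsign, fun k l hne ↦ two_le_kendall_of_sign_eq hne (by rw [hsign, hsign])⟩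
end

section
/- More generally, for every n ≥ 3 and every permutation π ∈ S_{2n+1}, t_{2n-3}⁻¹ ∘ t_{2n-1} ∘ t_{2n-3}⁻¹ (π) = t_{2n-1}⁻¹ ∘ t_{2n-3} ∘ t_{2n-1}⁻¹ (π). -/
/-- The inverse of the push-to-the-top operation `t_{i+1}`. -/
def pushToTopInv {n : ℕ} (i : Fin n) (π : Equiv.Perm (Fin n)) : Equiv.Perm (Fin n) :=
  π * Fin.cycleRange i

/-! Writing `cᵢ` for `Fin.cycleRange i`, we have `c_{i+2} = cᵢ τ` where `τ = Fin.cycleIcc i (i+2)`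
is a 3-cycle. For any `a` and any `τ` with `τ³ = 1`,
`a (aτ)⁻¹ a = aτ⁻¹ = aτ² = (aτ) a⁻¹ (aτ)`. -/

theorem mul_inv_mul_eq_of_pow_three_eq_one {G : Type*} [Group G] (a τ : G) (hτ : τ ^ 3 = 1) :
    a * (a * τ)⁻¹ * a = a * τ * a⁻¹ * (a * τ) := by
  have hτ_inv : τ⁻¹ = τ * τ := by
    rw [inv_eq_iff_mul_eq_one, ← hτ, pow_three]
  rw [mul_inv_rev, hτ_inv]
  group

namespace Fin

theorem cycleRange_eq_mul_cycleIcc {n : ℕ} [NeZero n] {i j : Fin n} (hij : i ≤ j) :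
    cycleRange j = cycleRange i * cycleIcc i j := by
  apply DFunLike.coe_injective
  rw [Equiv.Perm.coe_mul, ← cycleIcc_zero_eq_cycleRange, ← cycleIcc_zero_eq_cycleRange,
    cycleIcc.trans (zero_le i) hij]

theorem isThreeCycle_cycleIcc {n : ℕ} {i j : Fin n} (hij : (j : ℕ) = i + 2) :
    (cycleIcc i j).IsThreeCycle := by
  have hlt : i < j := by rw [lt_def]; omega
  rw [Equiv.Perm.IsThreeCycle, cycleType_cycleIcc_of_lt hlt, hij]
  congr 1
  omega

theorem cycleRange_mul_inv_mul_of_val_eq_add_two {n : ℕ} [NeZero n] {i j : Fin n}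
    (hij : (j : ℕ) = i + 2) :
    cycleRange i * (cycleRange j)⁻¹ * cycleRange i =
      cycleRange j * (cycleRange i)⁻¹ * cycleRange j := by
  rw [cycleRange_eq_mul_cycleIcc (i := i) (j := j) (by rw [le_def]; omega)]
  exact mul_inv_mul_eq_of_pow_three_eq_one _ _
    ((isThreeCycle_cycleIcc hij).orderOf ▸ pow_orderOf_eq_one _)

end Fin

theorem pushToTopInv_pushToTop_pushToTopInv_comm {n : ℕ} [NeZero n] {i j : Fin n}
    (hij : (j : ℕ) = i + 2) (π : Equiv.Perm (Fin n)) :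
    pushToTopInv i (pushToTop j (pushToTopInv i π)) =
      pushToTopInv j (pushToTop i (pushToTopInv j π)) := by
  simp only [pushToTop, pushToTopInv, mul_assoc]
  rw [← mul_assoc (Fin.cycleRange i), ← mul_assoc (Fin.cycleRange j),
    Fin.cycleRange_mul_inv_mul_of_val_eq_add_two hij]

/-- For every `n ≥ 3` and `π ∈ S_{2n+1}`:
`t_{2n-3}⁻¹ ∘ t_{2n-1} ∘ t_{2n-3}⁻¹ (π) = t_{2n-1}⁻¹ ∘ t_{2n-3} ∘ t_{2n-1}⁻¹ (π)`
(1-indexed `t_{2n-3} = pushToTop ⟨2n-4⟩`, `t_{2n-1} = pushToTop ⟨2n-2⟩`). -/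
theorem stmt_6 {n : ℕ} (hn : 3 ≤ n) (π : Equiv.Perm (Fin (2 * n + 1))) :
    pushToTopInv ⟨2 * n - 4, by omega⟩
      (pushToTop ⟨2 * n - 2, by omega⟩ (pushToTopInv ⟨2 * n - 4, by omega⟩ π)) =
    pushToTopInv ⟨2 * n - 2, by omega⟩
      (pushToTop ⟨2 * n - 4, by omega⟩ (pushToTopInv ⟨2 * n - 2, by omega⟩ π)) :=
  pushToTopInv_pushToTop_pushToTopInv_comm (by simp only; omega) π
end

section
/- There exists a tree (a connected, acyclic subhypergraph in the sense that adding edges one at a time each new edge meets the previously covered vertex set in exactly one vertex) in the hypergraph H_{2n+1} covering all 2n(2n+1) vertices except the vertex (2,1): concretely, the recursive edge set consisting of T_5 = {⟨1,2,3⟩,⟨1,2,4⟩,⟨1,2,5⟩,⟨1,5,3⟩,⟨2,3,5⟩,⟨1,3,4⟩,⟨2,4,3⟩,⟨1,4,5⟩,⟨2,5,4⟩} together with, for each m from 3 to n, the edges ⟨x,x+1,2m⟩ and ⟨x,x+1,2m+1⟩ for 2 ≤ x ≤ 2m-2, and ⟨1,2,2m⟩, ⟨1,2m,2m-1⟩,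 ⟨1,2m+1,2m-1⟩, ⟨1,2m,2m+1⟩, ⟨2,2m+1,2m⟩, covers exactly the vertex set V \ {(2,1)}. -/
/-- The three vertices of the hyperedge `⟨x,y,z⟩` of `H_{2n+1}` given by an ordered
triple `e = (x,y,z)`: namely `(x,y)`, `(y,z)` and `(z,x)`. -/
def edgeVerts {m : ℕ} (e : Fin m × Fin m × Fin m) : Finset (Fin m × Fin m) :=
  {(e.1, e.2.1), (e.2.1, e.2.2), (e.2.2, e.1)}

/-- The set of vertices covered by a list of hyperedges. -/
def covered {m : ℕ} (es : List (Fin m × Fin m × Fin m)) : Finset (Fin m × Fin m) :=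
  es.foldr (fun e s => edgeVerts e ∪ s) ∅

/-!
An edge that shares a vertex with the previously covered set adds at most two new vertices.
The explicit edge list has `n(2n+1)` edges, each sharing a vertex with the earlier ones, and it
covers all `2n(2n+1) - 1` admissible pairs. Since `2n(2n+1) - 1 = 3 + 2(n(2n+1) - 1)`, every
edge after the first must add exactly two new vertices, i.e. meet its predecessors in exactly
one vertex. Stage `m` attaches the two new elements `2m`, `2m+1` to all earlier ones in both
directions, every stage edge containing an already covered pair.
-/

namespace CyclicTriple

variable {α β : Type*} [DecidableEq α] [DecidableEq β]

def verts (e : α × α × α) : Finset (α × α) := {(e.1, e.2.1), (e.2.1, e.2.2), (e.2.2, e.1)}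

def cover (l : List (α × α × α)) : Finset (α × α) := l.foldr (fun e s => verts e ∪ s) ∅

@[simp] lemma cover_nil : cover ([] : List (α × α × α)) = ∅ := rfl

@[simp] lemma cover_cons (e : α × α × α) (l : List (α × α × α)) :
    cover (e :: l) = verts e ∪ cover l := rfl

lemma cover_append (l₁ l₂ : List (α × α × α)) : cover (l₁ ++ l₂) = cover l₁ ∪ cover l₂ := by
  induction l₁ with
  | nil => simp
  | cons e l ih => simp [ih, Finset.union_assoc]

lemma mem_cover {p : α × α} {l : List (α × α × α)} : p ∈ cover l ↔ ∃ e ∈ l, p ∈ verts e := by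
  induction l with
  | nil => simp
  | cons e l ih => simp [ih]

lemma verts_subset_cover {e : α × α × α} {l : List (α × α × α)} (he : e ∈ l) :
    verts e ⊆ cover l := fun _ hp => mem_cover.2 ⟨e, he, hp⟩

lemma verts_map (f : α → β) (e : α × α × α) :
    verts (Prod.map f (Prod.map f f) e) = (verts e).image (Prod.map f f) := by
  obtain ⟨x, y, z⟩ := e
  simp [verts, Finset.image_insert]

lemma cover_map (f : α → β) (l : List (α × α × α)) :
    cover (l.map (Prod.map f (Prod.map f f))) = (cover l).image (Prod.map f f) := by
  induction l with
  | nil => simp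
  | cons e l ih => simp [ih, verts_map, Finset.image_union]

def Attached : Finset (α × α) → List (α × α × α) → Prop
  | _, [] => True
  | s, e :: l => (verts e ∩ s).Nonempty ∧ Attached (s ∪ verts e) l

lemma attached_append {s : Finset (α × α)} {l₁ l₂ : List (α × α × α)} :
    Attached s (l₁ ++ l₂) ↔ Attached s l₁ ∧ Attached (s ∪ cover l₁) l₂ := by
  induction l₁ generalizing s with
  | nil => simp [Attached]
  | cons e l ih => simp [Attached, ih, Finset.union_assoc, and_assoc]

lemma attached_of_forall_exists_mem {s : Finset (α × α)} {l : List (α × α × α)}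
    (h : ∀ e ∈ l, ∃ p ∈ verts e, p ∈ s) : Attached s l := by
  induction l generalizing s with
  | nil => trivial
  | cons e l ih =>
    obtain ⟨p, hpe, hps⟩ := h e List.mem_cons_self
    refine ⟨⟨p, Finset.mem_inter.2 ⟨hpe, hps⟩⟩, ih fun e' he' => ?_⟩
    obtain ⟨q, hqe, hqs⟩ := h e' (List.mem_cons_of_mem _ he')
    exact ⟨q, hqe, Finset.mem_union_left _ hqs⟩

lemma Attached.map (f : α → β) {s : Finset (α × α)} {l : List (α × α × α)}
    (h : Attached s l) :
    Attached (s.image (Prod.map f f)) (l.map (Prod.map f (Prod.map f f))) := by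
  induction l generalizing s with
  | nil => trivial
  | cons e l ih =>
    refine ⟨?_, ?_⟩
    · rw [verts_map]
      exact (h.1.image _).mono (Finset.image_inter_subset _ _ _)
    · simpa [Finset.image_union, verts_map] using ih h.2

lemma card_union_verts_le {s : Finset (α × α)} {e : α × α × α} (h : (verts e ∩ s).Nonempty) :
    (s ∪ verts e).card ≤ s.card + 2 := by
  have hunion := Finset.card_union_add_card_inter (verts e) s
  have hthree : (verts e).card ≤ 3 := Finset.card_le_three
  have hpos := h.card_pos
  rw [Finset.union_comm] at hunion
  omega

lemma card_inter_verts_eq_one {s : Finset (α × α)} {e : α × α × α}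
    (h : (verts e ∩ s).Nonempty) (hcard : s.card + 2 ≤ (s ∪ verts e).card) :
    (verts e ∩ s).card = 1 := by
  have hunion := Finset.card_union_add_card_inter (verts e) s
  have hthree : (verts e).card ≤ 3 := Finset.card_le_three
  have hpos := h.card_pos
  rw [Finset.union_comm] at hunion
  omega

lemma card_union_cover_le {s : Finset (α × α)} {l : List (α × α × α)} (h : Attached s l) :
    (s ∪ cover l).card ≤ s.card + 2 * l.length := by
  induction l generalizing s with
  | nil => simp
  | cons e l ih =>
    have htail := ih h.2
    have hhead := card_union_verts_le h.1
    rw [cover_cons, ← Finset.union_assoc, List.length_cons]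
    omega

/-- Equality in `card_union_cover_le` forces every edge to add exactly two new vertices. -/
lemma card_inter_eq_one_of_card_le {s : Finset (α × α)} {l : List (α × α × α)}
    (h : Attached s l) (hcard : s.card + 2 * l.length ≤ (s ∪ cover l).card) :
    ∀ j (hj : j < l.length), (verts l[j] ∩ (s ∪ cover (l.take j))).card = 1 := by
  induction l generalizing s with
  | nil => simp
  | cons e l ih =>
    have htail := card_union_cover_le h.2
    have hhead := card_union_verts_le h.1
    rw [cover_cons, ← Finset.union_assoc, List.length_cons] at hcard
    rintro (_ | j) hj
    · simpa using card_inter_verts_eq_one h.1 (by omega)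
    · simpa [Finset.union_assoc] using ih h.2 (by omega) j (by simpa using hj)

lemma cover_eq_and_card_inter_eq_one {e : α × α × α} {l : List (α × α × α)}
    {T : Finset (α × α)} (h : Attached (verts e) l) (hT : T ⊆ cover (e :: l))
    (hcard : T.card = 2 * l.length + 3) :
    cover (e :: l) = T ∧
      ∀ j (hj : j < l.length), (verts l[j] ∩ cover (e :: l.take j)).card = 1 := by
  have hle := card_union_cover_le h
  have hsub := Finset.card_le_card hT
  have hthree : (verts e).card ≤ 3 := Finset.card_le_three
  rw [cover_cons] at hT hsub ⊢
  exact ⟨(Finset.eq_of_subset_of_card_le hT (by omega)).symm,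
    card_inter_eq_one_of_card_le h (by omega)⟩

lemma ne_of_verts_subset {e : α × α × α} {S : Finset (α × α)} (h : verts e ⊆ S)
    (hS : ∀ p ∈ S, p.1 ≠ p.2) : e.1 ≠ e.2.1 ∧ e.2.1 ≠ e.2.2 ∧ e.1 ≠ e.2.2 := by
  simp only [verts, Finset.insert_subset_iff, Finset.singleton_subset_iff] at h
  exact ⟨hS _ h.1, hS _ h.2.1, fun h' => hS _ h.2.2 h'.symm⟩

end CyclicTriple

lemma card_filter_ne_sdiff_singleton {γ : Type*} [Fintype γ] [DecidableEq γ] {x : γ × γ}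
    (hx : x.1 ≠ x.2) :
    ((Finset.univ.filter fun p : γ × γ => p.1 ≠ p.2) \ {x}).card =
      Fintype.card γ * Fintype.card γ - Fintype.card γ - 1 := by
  have hoff : Finset.univ.filter (fun p : γ × γ => p.1 ≠ p.2) = Finset.univ.offDiag := by
    ext; simp
  rw [hoff, Finset.card_sdiff_of_subset (by simpa using hx), Finset.offDiag_card,
    Finset.card_univ, Finset.card_singleton]

namespace NearlySpanningTree

open CyclicTriple

/- Elements of `[2n+1]` are shifted down by one, so the paper's edge `⟨x,y,z⟩` is
`(x-1, y-1, z-1)` and its excluded vertex `(2,1)` is `(1,0)`. `newEdges c` attaches the two new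
elements `c+1`, `c+2` to `[0, c]`; it is the paper's stage `m` for `c = 2m - 2`. -/

def baseEdges : List (ℕ × ℕ × ℕ) :=
  [(0, 1, 2), (0, 1, 3), (0, 1, 4), (0, 4, 2), (1, 2, 4), (0, 2, 3), (1, 3, 2), (0, 3, 4),
    (1, 4, 3)]

def fan (a s k : ℕ) : List (ℕ × ℕ × ℕ) := (List.range' s k).map fun x => (x, x + 1, a)

def newEdges (c : ℕ) : List (ℕ × ℕ × ℕ) :=
  (fan (c + 1) 0 c ++ (0, c + 1, c) :: fan (c + 2) 1 (c - 1) ++ [(0, c + 2, c)]) ++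
    [(0, c + 1, c + 2), (1, c + 2, c + 1)]

def treeEdges : ℕ → List (ℕ × ℕ × ℕ)
  | n + 3 => treeEdges (n + 2) ++ newEdges (2 * (n + 2))
  | _ => baseEdges

lemma mem_fan {a s k : ℕ} {e : ℕ × ℕ × ℕ} :
    e ∈ fan a s k ↔ ∃ x, s ≤ x ∧ x < s + k ∧ e = (x, x + 1, a) := by
  simp [fan, List.mem_range'_1, and_assoc, eq_comm]

lemma length_newEdges {c : ℕ} (hc : 1 ≤ c) : (newEdges c).length = 2 * c + 3 := by
  simp [newEdges, fan]
  omega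

lemma treeEdges_succ {n : ℕ} (hn : 2 ≤ n) :
    treeEdges (n + 1) = treeEdges n ++ newEdges (2 * n) := by
  obtain ⟨k, rfl⟩ := Nat.exists_eq_add_of_le' hn
  rfl

lemma treeEdges_eq_cons {n : ℕ} (hn : 2 ≤ n) :
    treeEdges n = (0, 1, 2) :: (treeEdges n).tail := by
  induction n, hn using Nat.le_induction with
  | base => rfl
  | succ n hn ih => rw [treeEdges_succ hn, ih]; rfl

lemma length_treeEdges {n : ℕ} (hn : 2 ≤ n) : (treeEdges n).length + 1 = n * (2 * n + 1) := by
  induction n, hn using Nat.le_induction with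
  | base => rfl
  | succ n hn ih =>
    rw [treeEdges_succ hn, List.length_append, length_newEdges (by omega)]
    nlinarith

lemma mem_cover_newEdges {c u v : ℕ} (hu : u < c + 3) (hv : v < c + 3) (huv : u ≠ v)
    (hnew : c < u ∨ c < v) : (u, v) ∈ cover (newEdges c) := by
  have fan₁ : ∀ x < c, (x, x + 1, c + 1) ∈ newEdges c := by
    intro x hx; simp [newEdges, mem_fan]; omega
  have fan₂ : ∀ x, 1 ≤ x → x < c → (x, x + 1, c + 2) ∈ newEdges c := by
    intro x hx hx'; simp [newEdges, mem_fan]; omega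
  have h₁ : (0, c + 1, c) ∈ newEdges c := by simp [newEdges]
  have h₂ : (0, c + 2, c) ∈ newEdges c := by simp [newEdges]
  have h₃ : (0, c + 1, c + 2) ∈ newEdges c := by simp [newEdges]
  have h₄ : (1, c + 2, c + 1) ∈ newEdges c := by simp [newEdges]
  have key : ∀ e ∈ newEdges c, (u, v) ∈ verts e → (u, v) ∈ cover (newEdges c) :=
    fun e he hp => verts_subset_cover he hp
  rcases (by omega : v = c + 1 ∨ v = c + 2 ∨ u = c + 1 ∨ u = c + 2) with rfl | rfl | rfl | rfl
  · rcases (by omega : u = 0 ∨ (1 ≤ u ∧ u ≤ c) ∨ u = c + 2) with rfl | hu | rfl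
    · exact key _ h₁ (by simp [verts])
    · exact key _ (fan₁ (u - 1) (by omega)) (by simp [verts]; omega)
    · exact key _ h₄ (by simp [verts])
  · rcases (by omega : u = 0 ∨ u = 1 ∨ (2 ≤ u ∧ u ≤ c) ∨ u = c + 1) with rfl | rfl | hu | rfl
    · exact key _ h₂ (by simp [verts])
    · exact key _ h₄ (by simp [verts])
    · exact key _ (fan₂ (u - 1) (by omega) (by omega)) (by simp [verts]; omega)
    · exact key _ h₃ (by simp [verts])
  · rcases (by omega : v < c ∨ v = c ∨ v = c + 2) with hv | rfl | rfl
    · exact key _ (fan₁ v hv) (by simp [verts])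
    · exact key _ h₁ (by simp [verts])
    · exact key _ h₃ (by simp [verts])
  · rcases (by omega : v = 0 ∨ (1 ≤ v ∧ v < c) ∨ v = c ∨ v = c + 1) with rfl | hv | rfl | rfl
    · exact key _ h₃ (by simp [verts])
    · exact key _ (fan₂ v hv.1 hv.2) (by simp [verts])
    · exact key _ h₂ (by simp [verts])
    · exact key _ h₄ (by simp [verts])

lemma attached_newEdges {c : ℕ} (hc : 2 ≤ c) {S : Finset (ℕ × ℕ)}
    (hS : (Finset.range (c + 1)).offDiag.erase (1, 0) ⊆ S) : Attached S (newEdges c) := by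
  have old : ∀ u v, u ≤ c → v ≤ c → u ≠ v → (u, v) ≠ (1, 0) → (u, v) ∈ S := by
    intro u v hu hv huv h10
    exact hS (by simp [h10]; omega)
  rw [newEdges, attached_append]
  set front := fan (c + 1) 0 c ++ (0, c + 1, c) :: fan (c + 2) 1 (c - 1) ++ [(0, c + 2, c)]
    with hfront
  refine ⟨attached_of_forall_exists_mem fun e he => ?_,
    attached_of_forall_exists_mem fun e he => ?_⟩
  · simp only [hfront, List.mem_append, List.mem_cons, mem_fan, List.not_mem_nil,
      or_false] at he
    rcases he with (⟨x, -, hx, rfl⟩ | rfl | ⟨x, hx, hx', rfl⟩) | rfl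
    · exact ⟨(x, x + 1), by simp [verts], old _ _ (by omega) (by omega) (by omega) (by simp)⟩
    · exact ⟨(c, 0), by simp [verts], old _ _ le_rfl (by omega) (by omega) (by simp; omega)⟩
    · exact ⟨(x, x + 1), by simp [verts], old _ _ (by omega) (by omega) (by omega) (by simp)⟩
    · exact ⟨(c, 0), by simp [verts], old _ _ le_rfl (by omega) (by omega) (by simp; omega)⟩
  · have earlier : ∀ e' ∈ front, ∀ p ∈ verts e', p ∈ S ∪ cover front :=
      fun e' he' p hp => Finset.mem_union_right _ (verts_subset_cover he' hp)
    simp only [List.mem_cons, List.not_mem_nil, or_false] at he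
    rcases he with rfl | rfl
    · exact ⟨(0, c + 1), by simp [verts],
        earlier (0, c + 1, c) (by simp [hfront]) _ (by simp [verts])⟩
    · exact ⟨(c + 1, 1), by simp [verts],
        earlier (1, 2, c + 1) (by simp [hfront, mem_fan]; omega) _ (by simp [verts])⟩

lemma offDiag_erase_subset_cover_treeEdges {n : ℕ} (hn : 2 ≤ n) :
    (Finset.range (2 * n + 1)).offDiag.erase (1, 0) ⊆ cover (treeEdges n) := by
  induction n, hn using Nat.le_induction with
  | base => decide
  | succ n hn ih =>
    rintro ⟨u, v⟩ huv
    simp only [Finset.mem_erase, Finset.mem_offDiag, Finset.mem_range] at huv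
    rw [treeEdges_succ hn, cover_append]
    by_cases hold : u < 2 * n + 1 ∧ v < 2 * n + 1
    · exact Finset.mem_union_left _ (ih (by simp [huv.1, hold, huv.2.2.2]))
    · exact Finset.mem_union_right _
        (mem_cover_newEdges (by omega) (by omega) huv.2.2.2 (by omega))

lemma attached_treeEdges {n : ℕ} (hn : 2 ≤ n) :
    Attached (verts (0, 1, 2)) (treeEdges n).tail := by
  induction n, hn using Nat.le_induction with
  | base =>
    simp only [treeEdges, baseEdges, List.tail_cons, Attached]
    decide
  | succ n hn ih =>
    have hcover : verts (0, 1, 2) ∪ cover (treeEdges n).tail = cover (treeEdges n) := by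
      rw [← cover_cons, ← treeEdges_eq_cons hn]
    rw [treeEdges_succ hn, treeEdges_eq_cons hn, List.cons_append, List.tail_cons,
      attached_append, hcover]
    exact ⟨ih, attached_newEdges (by omega) (offDiag_erase_subset_cover_treeEdges hn)⟩

lemma subset_cover_map_treeEdges {n : ℕ} (hn : 2 ≤ n) {x : Fin (2 * n + 1) × Fin (2 * n + 1)}
    (hx : (x.1 : ℕ) = 1 ∧ (x.2 : ℕ) = 0) :
    (Finset.univ.filter fun p : Fin (2 * n + 1) × Fin (2 * n + 1) => p.1 ≠ p.2) \ {x} ⊆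
      cover ((treeEdges n).map
        (Prod.map (Fin.ofNat _) (Prod.map (Fin.ofNat _) (Fin.ofNat _)))) := by
  rintro ⟨u, v⟩ huv
  rw [cover_map]
  refine Finset.mem_image.2 ⟨(u, v), offDiag_erase_subset_cover_treeEdges hn ?_, by simp⟩
  obtain ⟨x₁, x₂⟩ := x
  rw [Finset.mem_sdiff, Finset.mem_filter, Finset.mem_singleton] at huv
  simp only [Finset.mem_erase, Finset.mem_offDiag, Finset.mem_range, ne_eq, Prod.mk.injEq,
    Fin.ext_iff] at huv hx ⊢
  omega

end NearlySpanningTree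

open CyclicTriple NearlySpanningTree

/-- There is a nearly spanning tree in the hypergraph `H_{2n+1}`: a list of hyperedges
(cyclic triples of distinct elements) such that every edge after the first meets the set of
previously covered vertices in exactly one vertex, and which covers precisely all ordered
pairs of distinct elements of `[2n+1]` except the vertex `(2,1)` (elements 0-indexed, so
`(2,1)` is `(⟨1⟩,⟨0⟩)`). -/
theorem stmt_13 (n : ℕ) (hn : 2 ≤ n) :
    ∃ es : List (Fin (2 * n + 1) × Fin (2 * n + 1) × Fin (2 * n + 1)),
      (∀ e ∈ es, e.1 ≠ e.2.1 ∧ e.2.1 ≠ e.2.2 ∧ e.1 ≠ e.2.2) ∧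
      (∀ k : ℕ, ∀ hk : k < es.length, 0 < k →
        (edgeVerts (es.get ⟨k, hk⟩) ∩ covered (es.take k)).card = 1) ∧
      covered es =
        (Finset.univ.filter fun p : Fin (2 * n + 1) × Fin (2 * n + 1) => p.1 ≠ p.2) \
          {(⟨1, by omega⟩, ⟨0, by omega⟩)} := by
  set T := (Finset.univ.filter fun p : Fin (2 * n + 1) × Fin (2 * n + 1) => p.1 ≠ p.2) \
    {(⟨1, by omega⟩, ⟨0, by omega⟩)} with hT
  set F : ℕ × ℕ × ℕ → Fin (2 * n + 1) × Fin (2 * n + 1) × Fin (2 * n + 1) :=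
    Prod.map (Fin.ofNat _) (Prod.map (Fin.ofNat _) (Fin.ofNat _)) with hF
  set l := (treeEdges n).tail
  have hl : treeEdges n = (0, 1, 2) :: l := treeEdges_eq_cons hn
  have hAtt : Attached (verts (F (0, 1, 2))) (l.map F) := by
    rw [hF, verts_map]
    exact (attached_treeEdges hn).map _
  have hsub : T ⊆ cover (F (0, 1, 2) :: l.map F) := by
    rw [← List.map_cons, ← hl]
    exact subset_cover_map_treeEdges hn ⟨rfl, rfl⟩
  have hcard : T.card = 2 * (l.map F).length + 3 := by
    have hlen := length_treeEdges hn
    rw [hl, List.length_cons] at hlen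
    have hsq : (2 * n + 1) * (2 * n + 1) = 2 * (n * (2 * n + 1)) + (2 * n + 1) := by ring
    rw [hT, card_filter_ne_sdiff_singleton (by simp), Fintype.card_fin, List.length_map]
    omega
  obtain ⟨hcov, htree⟩ := cover_eq_and_card_inter_eq_one hAtt hsub hcard
  refine ⟨F (0, 1, 2) :: l.map F, fun e he => ?_, ?_, hcov⟩
  · refine ne_of_verts_subset (hcov ▸ verts_subset_cover he) fun p hp => ?_
    rw [hT, Finset.mem_sdiff, Finset.mem_filter] at hp
    exact hp.1.2
  · rintro (_ | j) hj hpos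
    · omega
    · exact htree j _
end
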